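/- arXiv:2002.10978 — 6 statements merged into one kernel-verified Lean document; each statement's English description precedes it below -/
import Mathlib

section
/- The Prabhakar function satisfies the parameter-reduction formula αγ E_{α,β}^{γ+1}(z) = E_{α,β-1}^γ(z) + (1 - β + αγ) E_{α,β}^γ(z) for all z ∈ ℂ, where α > 0 and γ ≠ 0. -/
open scoped BigOperators

set_option maxHeartbeats 1000000

/-- Pochhammer symbol `(γ)_k = γ(γ+1)⋯(γ+k-1)`. -/
noncomputable def poch (γ : ℝ) (k : ℕ) : ℝ := ∏ i ∈ Finset.range k, (γ + i)

/-- The Prabhakar (three-parameter Mittag-Leffler) function. -/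
noncomputable def prabhakar (α β γ : ℝ) (z : ℂ) : ℂ :=
  ∑' k : ℕ, ((poch γ k / (Nat.factorial k * Real.Gamma (α * k + β)) : ℝ) : ℂ) * z ^ k

/-- `γ (γ+1)_k = (γ)_k (γ+k)`. -/
lemma poch_shift (γ : ℝ) (k : ℕ) : γ * poch (γ + 1) k = poch γ k * (γ + k) := by
  induction k with
  | zero => simp [poch]
  | succ n ih =>
      simp only [poch, Finset.prod_range_succ] at ih ⊢
      push_cast
      linear_combination (γ + 1 + (n:ℝ)) * ih

/-- `1/Γ(x-1) = (x-1)/Γ(x)` holds with Mathlib's junk values everywhere. -/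
lemma one_div_Gamma_sub_one (x : ℝ) :
    1 / Real.Gamma (x - 1) = (x - 1) / Real.Gamma x := by
  by_cases hx : x - 1 = 0
  · rw [hx, Real.Gamma_zero]
    simp [hx]
  by_cases hz : Real.Gamma (x - 1) = 0
  · have : ∃ m : ℕ, x - 1 = -m := by
      by_contra h
      push_neg at h
      exact Real.Gamma_ne_zero h hz
    obtain ⟨m, hm⟩ := this
    have hm0 : m ≠ 0 := by
      rintro rfl; simp at hm; exact hx hm
    obtain ⟨n, rfl⟩ := Nat.exists_eq_succ_of_ne_zero hm0
    have hxn : x = -n := by push_cast at hm ⊢; linarith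
    rw [hz, hxn, Real.Gamma_neg_nat_eq_zero]
    simp
  · have h := Real.Gamma_add_one hx
    rw [show x - 1 + 1 = x by ring] at h
    rw [h]
    field_simp

/-- key Gamma lower bound: for `x ≥ 2`, `x Γ(x) ≤ Γ(x+α) (x+δ)^(1-δ)` where
`δ = min α (1/2)`. -/
lemma gamma_key (α : ℝ) (hα : 0 < α) {x : ℝ} (hx : 2 ≤ x) :
    x * Real.Gamma x ≤ Real.Gamma (x + α) * (x + min α (1/2)) ^ (1 - min α (1/2) : ℝ) := by
  set δ : ℝ := min α (1/2) with hδ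
  have hδ0 : 0 < δ := lt_min hα (by norm_num)
  have hδ1 : δ < 1 := lt_of_le_of_lt (min_le_right _ _) (by norm_num)
  have hδα : δ ≤ α := min_le_left _ _
  have hx0 : (0:ℝ) < x := by linarith
  have hxδ : (0:ℝ) < x + δ := by linarith
  have hG : 0 < Real.Gamma (x + δ) := Real.Gamma_pos_of_pos hxδ
  -- log-convexity inequality
  have h1 : Real.Gamma (δ * (x + δ) + (1 - δ) * (x + δ + 1)) ≤
      Real.Gamma (x + δ) ^ (δ:ℝ) * Real.Gamma (x + δ + 1) ^ (1 - δ : ℝ) :=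
    Real.Gamma_mul_add_mul_le_rpow_Gamma_mul_rpow_Gamma hxδ (by linarith) hδ0
      (by linarith) (by ring)
  have harg : δ * (x + δ) + (1 - δ) * (x + δ + 1) = x + 1 := by ring
  rw [harg, Real.Gamma_add_one (by positivity : x ≠ 0),
    Real.Gamma_add_one (ne_of_gt hxδ)] at h1
  have h2 : Real.Gamma (x + δ) ^ (δ:ℝ) * ((x + δ) * Real.Gamma (x + δ)) ^ (1 - δ : ℝ)
      = Real.Gamma (x + δ) * (x + δ) ^ (1 - δ : ℝ) := by
    rw [Real.mul_rpow (le_of_lt hxδ) (le_of_lt hG)]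
    rw [show Real.Gamma (x+δ) ^ (δ:ℝ) * ((x+δ)^(1-δ:ℝ) * Real.Gamma (x+δ) ^ (1-δ:ℝ))
        = (Real.Gamma (x+δ) ^ (δ:ℝ) * Real.Gamma (x+δ) ^ (1-δ:ℝ)) * (x+δ)^(1-δ:ℝ) by ring]
    rw [← Real.rpow_add hG]
    norm_num
  rw [h2] at h1
  have h3 : Real.Gamma (x + δ) ≤ Real.Gamma (x + α) := by
    rcases eq_or_lt_of_le hδα with h | h
    · rw [h]
    · exact le_of_lt (Real.Gamma_strictMonoOn_Ici (by simp only [Set.mem_Ici]; linarith)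
        (by simp only [Set.mem_Ici]; linarith) (by linarith))
  have hpow : (0:ℝ) ≤ (x + δ) ^ (1 - δ : ℝ) := Real.rpow_nonneg (le_of_lt hxδ) _
  nlinarith [mul_le_mul_of_nonneg_right h3 hpow]

/-- The Prabhakar series is summable for every `z` (ratio test). -/
lemma summable_prab (α β γ : ℝ) (hα : 0 < α) (z : ℂ) :
    Summable (fun k : ℕ =>
      ((poch γ k / (Nat.factorial k * Real.Gamma (α * k + β)) : ℝ) : ℂ) * z ^ k) := by
  set δ : ℝ := min α (1/2) with hδ
  have hδ0 : 0 < δ := lt_min hα (by norm_num)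
  have hδ1 : δ < 1 := lt_of_le_of_lt (min_le_right _ _) (by norm_num)
  apply summable_of_ratio_norm_eventually_le (r := 1/2) (by norm_num)
  have hx_t : Filter.Tendsto (fun k : ℕ => α * k + β) Filter.atTop Filter.atTop := by
    apply Filter.tendsto_atTop_add_const_right
    exact (tendsto_natCast_atTop_atTop).const_mul_atTop hα
  have hneg : Filter.Tendsto (fun k : ℕ => (α * k + β) ^ (-δ : ℝ)) Filter.atTop (nhds 0) :=
    (tendsto_rpow_neg_atTop hδ0).comp hx_t
  have hε : (0:ℝ) < 1 / (8 * ‖z‖ + 1) := by positivity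
  have E3 : ∀ᶠ k : ℕ in Filter.atTop, (α * k + β) ^ (-δ : ℝ) < 1 / (8 * ‖z‖ + 1) := by
    have := hneg.eventually (gt_mem_nhds hε)
    simpa using this
  have E1 : ∀ᶠ k : ℕ in Filter.atTop, 2 ≤ α * k + β := hx_t.eventually_ge_atTop 2
  have E2 : ∀ᶠ k : ℕ in Filter.atTop, |γ| ≤ (k : ℝ) :=
    tendsto_natCast_atTop_atTop.eventually_ge_atTop |γ|
  filter_upwards [E1, E2, E3] with k h1 h2 h3
  set x : ℝ := α * k + β with hxdef
  have hx0 : (0:ℝ) < x := by linarith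
  have hxδ : (0:ℝ) < x + δ := by linarith
  have hG1 : 0 < Real.Gamma x := Real.Gamma_pos_of_pos hx0
  have hG2 : 0 < Real.Gamma (x + α) := Real.Gamma_pos_of_pos (by linarith)
  -- the (E3) consequence : 4‖z‖ (x+δ)^(1-δ) ≤ x
  have hpow : (x + δ) ^ (1 - δ : ℝ) ≤ 2 * (x ^ (1 - δ : ℝ)) := by
    calc (x + δ) ^ (1 - δ : ℝ) ≤ (2 * x) ^ (1 - δ : ℝ) := by
          apply Real.rpow_le_rpow (le_of_lt hxδ) (by linarith) (by linarith)
      _ = 2 ^ (1 - δ : ℝ) * x ^ (1 - δ : ℝ) := by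
          rw [Real.mul_rpow (by norm_num) (le_of_lt hx0)]
      _ ≤ 2 * x ^ (1 - δ : ℝ) := by
          have h21 : (2:ℝ) ^ (1 - δ : ℝ) ≤ 2 ^ (1:ℝ) :=
            Real.rpow_le_rpow_of_exponent_le (by norm_num) (by linarith)
          have : (2:ℝ) ^ (1:ℝ) = 2 := by norm_num
          have hxp : (0:ℝ) ≤ x ^ (1 - δ : ℝ) := Real.rpow_nonneg (le_of_lt hx0) _
          nlinarith
  have hsplit : x ^ (1 - δ : ℝ) = x * x ^ (-δ : ℝ) := by
    rw [show (1 - δ : ℝ) = 1 + (-δ) by ring, Real.rpow_add hx0, Real.rpow_one]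
  have hE3' : 8 * ‖z‖ * x ^ (-δ : ℝ) ≤ 1 := by
    have hxneg : (0:ℝ) ≤ x ^ (-δ : ℝ) := Real.rpow_nonneg (le_of_lt hx0) _
    have : 8 * ‖z‖ * x ^ (-δ : ℝ) ≤ 8 * ‖z‖ * (1 / (8 * ‖z‖ + 1)) := by
      apply mul_le_mul_of_nonneg_left (le_of_lt h3) (by positivity)
    have h8 : 8 * ‖z‖ * (1 / (8 * ‖z‖ + 1)) ≤ 1 := by
      rw [mul_one_div, div_le_one (by positivity)]
      linarith [norm_nonneg z]
    linarith
  have hE3 : 4 * ‖z‖ * (x + δ) ^ (1 - δ : ℝ) ≤ x := by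
    have hz0 : (0:ℝ) ≤ ‖z‖ := norm_nonneg z
    have hxneg : (0:ℝ) ≤ x ^ (-δ : ℝ) := Real.rpow_nonneg (le_of_lt hx0) _
    calc 4 * ‖z‖ * (x + δ) ^ (1 - δ : ℝ) ≤ 4 * ‖z‖ * (2 * x ^ (1 - δ : ℝ)) := by
          apply mul_le_mul_of_nonneg_left hpow (by positivity)
      _ = x * (8 * ‖z‖ * x ^ (-δ : ℝ)) := by rw [hsplit]; ring
      _ ≤ x * 1 := mul_le_mul_of_nonneg_left hE3' (le_of_lt hx0)
      _ = x := mul_one x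
  -- the gamma comparison : 4‖z‖ Γ(x) ≤ Γ(x+α)
  have hkey := gamma_key α hα h1
  have hgam : 4 * ‖z‖ * Real.Gamma x ≤ Real.Gamma (x + α) := by
    have hpos : (0:ℝ) ≤ (x + δ) ^ (1 - δ : ℝ) := Real.rpow_nonneg (le_of_lt hxδ) _
    nlinarith [mul_le_mul_of_nonneg_right hE3 (le_of_lt hG1),
      mul_le_mul_of_nonneg_left hkey (show (0:ℝ) ≤ 4 * ‖z‖ by positivity)]
  -- now compute norms
  have hxsucc : α * ((k+1 : ℕ) : ℝ) + β = x + α := by push_cast; ring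
  have hfac : ((Nat.factorial (k+1) : ℝ)) = (k+1) * Nat.factorial k := by
    rw [Nat.factorial_succ]; push_cast; ring
  have hpoch : poch γ (k+1) = poch γ k * (γ + k) := by
    simp [poch, Finset.prod_range_succ]
  have hnorm : ∀ (c : ℝ) (m : ℕ), ‖((c:ℝ):ℂ) * z ^ m‖ = |c| * ‖z‖ ^ m := by
    intro c m
    rw [norm_mul, Complex.norm_real, norm_pow]
    rfl
  rw [hnorm, hnorm, hxsucc, hpoch, hfac]
  rw [abs_div, abs_div]
  have hFk : (0:ℝ) < (Nat.factorial k : ℝ) := by positivity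
  have habs1 : |(Nat.factorial k : ℝ) * Real.Gamma x| = (Nat.factorial k : ℝ) * Real.Gamma x := by
    rw [abs_of_pos (by positivity)]
  have habs2 : |((k:ℝ)+1) * (Nat.factorial k : ℝ) * Real.Gamma (x + α)|
      = ((k:ℝ)+1) * (Nat.factorial k : ℝ) * Real.Gamma (x + α) := by
    rw [abs_of_pos (by positivity)]
  rw [habs1, habs2, abs_mul]
  rw [pow_succ]
  have hγk : |γ + (k:ℝ)| ≤ 2 * ((k:ℝ) + 1) := by
    have := abs_add_le γ (k:ℝ)
    have hk : |(k:ℝ)| = (k:ℝ) := abs_of_nonneg (by positivity)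
    rw [hk] at this
    linarith
  -- final arithmetic
  have hP : (0:ℝ) ≤ |poch γ k| := abs_nonneg _
  have hZ : (0:ℝ) ≤ ‖z‖ ^ k := by positivity
  have hD1 : (0:ℝ) < (Nat.factorial k : ℝ) * Real.Gamma x := by positivity
  have hD2 : (0:ℝ) < ((k:ℝ)+1) * (Nat.factorial k : ℝ) * Real.Gamma (x + α) := by positivity
  have hrhs : 1 / 2 * (|poch γ k| / ((Nat.factorial k : ℝ) * Real.Gamma x) * ‖z‖ ^ k)
      = (1 / 2 * |poch γ k| * ‖z‖ ^ k) / ((Nat.factorial k : ℝ) * Real.Gamma x) := by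
    ring
  rw [div_mul_eq_mul_div, hrhs, div_le_div_iff₀ hD2 hD1]
  have hmain : |γ + (k:ℝ)| * ‖z‖ * Real.Gamma x * 2 ≤ ((k:ℝ)+1) * Real.Gamma (x + α) := by
    calc |γ + (k:ℝ)| * ‖z‖ * Real.Gamma x * 2
        ≤ (2 * ((k:ℝ)+1)) * ‖z‖ * Real.Gamma x * 2 := by
          have hh : (0:ℝ) ≤ ‖z‖ * Real.Gamma x * 2 := by positivity
          linarith [mul_le_mul_of_nonneg_right hγk hh]
      _ = ((k:ℝ)+1) * (4 * ‖z‖ * Real.Gamma x) := by ring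
      _ ≤ ((k:ℝ)+1) * Real.Gamma (x + α) := by
          apply mul_le_mul_of_nonneg_left hgam (by positivity)
  have hfin := mul_le_mul_of_nonneg_left hmain
    (show (0:ℝ) ≤ |poch γ k| * ‖z‖ ^ k * (Nat.factorial k : ℝ) / 2 by positivity)
  linarith [hfin]

/-- The reduction formula
`αγ E_{α,β}^{γ+1}(z) = E_{α,β-1}^γ(z) + (1-β+αγ) E_{α,β}^γ(z)` for all `z ∈ ℂ`,
where `α > 0` and `γ ≠ 0`. -/
theorem prabhakar_reduction_one (α β γ : ℝ) (hα : 0 < α) (hγ : γ ≠ 0) (z : ℂ) :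
    ((α * γ : ℝ) : ℂ) * prabhakar α β (γ + 1) z =
      prabhakar α (β - 1) γ z + ((1 - β + α * γ : ℝ) : ℂ) * prabhakar α β γ z := by
  unfold prabhakar
  rw [← tsum_mul_left, ← tsum_mul_left]
  rw [← Summable.tsum_add (summable_prab α (β-1) γ hα z)
      ((summable_prab α β γ hα z).mul_left (((1 - β + α * γ : ℝ)) : ℂ))]
  apply tsum_congr
  intro k
  have hcoef : (α * γ) * (poch (γ+1) k / (Nat.factorial k * Real.Gamma (α * k + β)))
      = poch γ k / (Nat.factorial k * Real.Gamma (α * k + (β - 1)))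
        + (1 - β + α * γ) * (poch γ k / (Nat.factorial k * Real.Gamma (α * k + β))) := by
    have hG : 1 / Real.Gamma (α * k + β - 1) = (α * k + β - 1) / Real.Gamma (α * k + β) :=
      one_div_Gamma_sub_one (α * k + β)
    have harg : α * k + (β - 1) = α * k + β - 1 := by ring
    rw [harg]
    have hp := poch_shift γ k
    have hF : (0:ℝ) < (Nat.factorial k : ℝ) := by positivity
    -- rewrite divisions
    have e1 : poch γ k / (Nat.factorial k * Real.Gamma (α * k + β - 1))
        = poch γ k / Nat.factorial k * (1 / Real.Gamma (α * k + β - 1)) := by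
      field_simp
    rw [e1, hG]
    have e2 : (α * γ) * (poch (γ+1) k / (Nat.factorial k * Real.Gamma (α * k + β)))
        = (α * (poch γ k * (γ + k))) / (Nat.factorial k * Real.Gamma (α * k + β)) := by
      rw [← hp]; ring
    rw [e2]
    by_cases hGz : Real.Gamma (α * k + β) = 0
    · simp [hGz]
    · field_simp
      ring
  calc ((α * γ : ℝ) : ℂ) * (((poch (γ+1) k / (Nat.factorial k * Real.Gamma (α * k + β)) : ℝ) : ℂ) * z ^ k)
      = (((α * γ) * (poch (γ+1) k / (Nat.factorial k * Real.Gamma (α * k + β))) : ℝ) : ℂ) * z ^ k := by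
        push_cast; ring
    _ = (((poch γ k / (Nat.factorial k * Real.Gamma (α * k + (β - 1)))
        + (1 - β + α * γ) * (poch γ k / (Nat.factorial k * Real.Gamma (α * k + β)))) : ℝ) : ℂ) * z ^ k := by
        rw [hcoef]
    _ = ((poch γ k / (Nat.factorial k * Real.Gamma (α * k + (β - 1))) : ℝ) : ℂ) * z ^ k
        + ((1 - β + α * γ : ℝ) : ℂ) * (((poch γ k / (Nat.factorial k * Real.Gamma (α * k + β)) : ℝ) : ℂ) * z ^ k) := by
        push_cast; ring
end

section
/- The Prabhakar function satisfies the second reduction formula αγ z E_{α,β}^{γ+1}(z) = E_{α,β-α-1}^γ(z) + (1 - β + α) E_{α,β-α}^γ(z) for all z ≠ 0, where α > 0 and γ ≠ 0. -/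
open scoped BigOperators

/-!
Write `c_k(β, γ) = (γ)_k / (k! Γ(αk + β))` for the coefficients. From `Γ(x) = (x - 1) Γ(x - 1)`,
`c_k(β - α - 1, γ) + (1 - β + α) c_k(β - α, γ) = αk c_k(β - α, γ)`, and from
`(γ)_{k+1} = γ (γ + 1)_k`, `α(k + 1) c_{k+1}(β - α, γ) = αγ c_k(β, γ + 1)`. So the right-hand side
is the series `Σ αk c_k(β - α, γ) z^k`, whose constant term vanishes, and shifting the index gives
the left-hand side. Splitting the sum needs convergence, which follows from the ratio test
since `Γ(x) / Γ(x + α) ≤ (x - 1)^(-α)` by log-convexity of `Γ`.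
-/

open Real Filter Topology

namespace Real

theorem Gamma_mul_rpow_le_Gamma_add {α x : ℝ} (hα : 0 < α) (hx : 1 < x) :
    Gamma x * (x - 1) ^ α ≤ Gamma (x + α) := by
  have hx1 : 0 < x - 1 := by linarith
  have hΓx : Gamma x = (x - 1) * Gamma (x - 1) := by
    simpa using Gamma_add_one hx1.ne'
  have hΓpos : ∀ y, 0 < y → 0 < Gamma y := fun y hy => Gamma_pos_of_pos hy
  -- log-convexity: the slope of `log ∘ Γ` on `[x - 1, x]`, which is `log (x - 1)`,
  -- is at most its slope on `[x, x + α]`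
  have hslope := convexOn_log_Gamma.slope_mono_adjacent (Set.mem_Ioi.2 hx1)
    (Set.mem_Ioi.2 (by linarith : 0 < x + α)) (by linarith : x - 1 < x)
    (by linarith : x < x + α)
  have hlog : α * log (x - 1) + log (Gamma x) ≤ log (Gamma (x + α)) := by
    have hleft : (log (Gamma x) - log (Gamma (x - 1))) / (x - (x - 1)) = log (x - 1) := by
      rw [hΓx, log_mul hx1.ne' (hΓpos _ hx1).ne', sub_sub_cancel, div_one, add_sub_cancel_right]
    simp only [Function.comp_apply] at hslope
    rw [hleft, add_sub_cancel_left, le_div_iff₀ hα] at hslope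
    linarith
  calc Gamma x * (x - 1) ^ α = exp (α * log (x - 1) + log (Gamma x)) := by
        rw [exp_add, exp_log (hΓpos _ (by linarith)), rpow_def_of_pos hx1, mul_comm α, mul_comm]
    _ ≤ Gamma (x + α) := by
        rwa [← exp_le_exp, exp_log (hΓpos _ (by linarith))] at hlog

theorem tendsto_Gamma_div_Gamma_add_atTop {α : ℝ} (hα : 0 < α) :
    Tendsto (fun x => Gamma x / Gamma (x + α)) atTop (𝓝 0) := by
  have hbound : Tendsto (fun x : ℝ => (x - 1) ^ (-α)) atTop (𝓝 0) :=
    (tendsto_rpow_neg_atTop hα).comp (tendsto_atTop_add_const_right _ (-1) tendsto_id)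
  refine tendsto_of_tendsto_of_tendsto_of_le_of_le' tendsto_const_nhds hbound ?_ ?_
  · filter_upwards [eventually_gt_atTop 0] with x hx
    exact div_nonneg (Gamma_pos_of_pos hx).le (Gamma_pos_of_pos (by linarith)).le
  · filter_upwards [eventually_gt_atTop 1] with x hx
    have hx1 : 0 < x - 1 := by linarith
    rw [div_le_iff₀ (Gamma_pos_of_pos (by linarith)), rpow_neg hx1.le, inv_mul_eq_div,
      le_div_iff₀ (rpow_pos_of_pos hx1 α)]
    exact Gamma_mul_rpow_le_Gamma_add hα hx

end Real

theorem poch_succ_left (γ : ℝ) (k : ℕ) : poch γ (k + 1) = γ * poch (γ + 1) k := by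
  simp only [poch, Finset.prod_range_succ', Nat.cast_add, Nat.cast_one, Nat.cast_zero, add_zero]
  rw [mul_comm]
  congr 1
  exact Finset.prod_congr rfl fun i _ => by ring

noncomputable def prabhakarCoeff (α β γ : ℝ) (k : ℕ) : ℝ :=
  poch γ k / (Nat.factorial k * Real.Gamma (α * k + β))

theorem prabhakar_eq_tsum (α β γ : ℝ) (z : ℂ) :
    prabhakar α β γ z = ∑' k : ℕ, (prabhakarCoeff α β γ k : ℂ) * z ^ k := rfl

theorem prabhakarCoeff_sub_one (α β γ : ℝ) (k : ℕ) :
    prabhakarCoeff α (β - 1) γ k = (α * k + β - 1) * prabhakarCoeff α β γ k := by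
  unfold prabhakarCoeff
  rw [add_sub_assoc', mul_div_assoc']
  rcases eq_or_ne (α * k + β - 1) 0 with h | h
  · simp [h, Real.Gamma_zero]
  · rw [show Real.Gamma (α * k + β) = (α * k + β - 1) * Real.Gamma (α * k + β - 1) by
      simpa using Real.Gamma_add_one h]
    field_simp

theorem succ_mul_prabhakarCoeff_succ (α β γ : ℝ) (k : ℕ) :
    (k + 1) * prabhakarCoeff α β γ (k + 1) = γ * prabhakarCoeff α (β + α) (γ + 1) k := by
  unfold prabhakarCoeff
  rw [poch_succ_left, Nat.factorial_succ]
  push_cast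
  rw [show α * (k + 1) + β = α * k + (β + α) by ring]
  field_simp

theorem prabhakarCoeff_succ (α β γ : ℝ) (k : ℕ) (hΓ : Real.Gamma (α * k + β) ≠ 0) :
    prabhakarCoeff α β γ (k + 1) = prabhakarCoeff α β γ k *
      ((γ + k) / (k + 1) * (Real.Gamma (α * k + β) / Real.Gamma (α * k + β + α))) := by
  unfold prabhakarCoeff
  rw [poch, Finset.prod_range_succ, ← poch, Nat.factorial_succ]
  push_cast
  rw [show α * (k + 1) + β = α * k + β + α by ring]
  field_simp
  exact (mul_div_mul_right _ _ (by rwa [mul_comm α] at hΓ)).symm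

theorem summable_prabhakar_series {α : ℝ} (hα : 0 < α) (β γ : ℝ) (z : ℂ) :
    Summable fun k : ℕ => (prabhakarCoeff α β γ k : ℂ) * z ^ k := by
  have hx : Tendsto (fun k : ℕ => α * k + β) atTop atTop :=
    tendsto_atTop_add_const_right _ β
      ((tendsto_natCast_atTop_atTop (R := ℝ)).const_mul_atTop hα)
  have hratio : Tendsto (fun k : ℕ => ‖z‖ * (|γ| + 1) *
      (Real.Gamma (α * k + β) / Real.Gamma (α * k + β + α))) atTop (𝓝 0) := by
    simpa using ((Real.tendsto_Gamma_div_Gamma_add_atTop hα).comp hx).const_mul (‖z‖ * (|γ| + 1))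
  refine summable_of_ratio_norm_eventually_le (r := 1 / 2) (by norm_num) ?_
  filter_upwards [hx.eventually_gt_atTop 0,
    hratio.eventually (ge_mem_nhds (by norm_num : (0 : ℝ) < 1 / 2))] with k hpos hsmall
  have hΓ : 0 < Real.Gamma (α * k + β) := Real.Gamma_pos_of_pos hpos
  have hΓα : 0 < Real.Gamma (α * k + β + α) := Real.Gamma_pos_of_pos (by linarith)
  have hγk : |γ + k| / (k + 1) ≤ |γ| + 1 := by
    rw [div_le_iff₀ (by positivity)]
    calc |γ + k| ≤ |γ| + k := by simpa using abs_add_le γ (k : ℝ)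
      _ ≤ (|γ| + 1) * (k + 1) := by nlinarith [abs_nonneg γ, (Nat.cast_nonneg k : (0 : ℝ) ≤ k)]
  set f := fun k : ℕ => (prabhakarCoeff α β γ k : ℂ) * z ^ k
  calc ‖f (k + 1)‖ = ‖z‖ * (|γ + k| / (k + 1)) *
        (Real.Gamma (α * k + β) / Real.Gamma (α * k + β + α)) * ‖f k‖ := by
        simp only [f, norm_mul, norm_pow, Complex.norm_real, Real.norm_eq_abs,
          prabhakarCoeff_succ α β γ k hΓ.ne', abs_div, abs_of_pos hΓ, abs_of_pos hΓα,
          pow_succ]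
        rw [abs_of_pos (by positivity : (0 : ℝ) < k + 1)]
        ring
    _ ≤ ‖z‖ * (|γ| + 1) * (Real.Gamma (α * k + β) / Real.Gamma (α * k + β + α)) * ‖f k‖ := by
        gcongr
    _ ≤ 1 / 2 * ‖f k‖ := by gcongr

theorem prabhakar_reduction_two_general (α β γ : ℝ) (hα : 0 < α)
    (z : ℂ) :
    ((α * γ : ℝ) : ℂ) * z * prabhakar α β (γ + 1) z =
      prabhakar α (β - α - 1) γ z + ((1 - β + α : ℝ) : ℂ) * prabhakar α (β - α) γ z := by
  set c : ℕ → ℂ := fun k => ((α * k * prabhakarCoeff α (β - α) γ k : ℝ) : ℂ) * z ^ k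
  have hrhs : prabhakar α (β - α - 1) γ z + ((1 - β + α : ℝ) : ℂ) * prabhakar α (β - α) γ z =
      ∑' k, c k := by
    rw [prabhakar_eq_tsum, prabhakar_eq_tsum, ← tsum_mul_left,
      ← (summable_prabhakar_series hα _ γ z).tsum_add
        ((summable_prabhakar_series hα _ γ z).mul_left _)]
    refine tsum_congr fun k => ?_
    simp only [c, prabhakarCoeff_sub_one]
    push_cast
    ring
  -- `c 0 = 0`, so the series of `c` may be reindexed from `1`
  have hshift : ∑' k, c (k + 1) = ∑' k, c k :=
    Nat.succ_injective.tsum_eq fun n hn => by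
      rw [Nat.range_succ]
      exact Nat.pos_of_ne_zero fun h => hn (by simp [c, h])
  rw [hrhs, ← hshift, prabhakar_eq_tsum, mul_assoc, ← tsum_mul_left, ← tsum_mul_left]
  refine tsum_congr fun k => ?_
  have hcoeff := succ_mul_prabhakarCoeff_succ α (β - α) γ k
  rw [sub_add_cancel] at hcoeff
  simp only [c, Nat.cast_succ, mul_assoc, hcoeff, pow_succ]
  push_cast
  ring

/-- The second reduction formula
`αγ z E_{α,β}^{γ+1}(z) = E_{α,β-α-1}^γ(z) + (1-β+α) E_{α,β-α}^γ(z)` for `z ≠ 0`,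
where `α > 0` and `γ ≠ 0`. -/
theorem prabhakar_reduction_two (α β γ : ℝ) (hα : 0 < α) (hγ : γ ≠ 0)
    (z : ℂ) (hz : z ≠ 0) :
    ((α * γ : ℝ) : ℂ) * z * prabhakar α β (γ + 1) z =
      prabhakar α (β - α - 1) γ z + ((1 - β + α : ℝ) : ℂ) * prabhakar α (β - α) γ z :=
  prabhakar_reduction_two_general α β γ hα z
end

section
/- The m-th derivative of the two-parameter Mittag-Leffler function satisfies (d^m/dz^m) E_{α,β}(z) = m! · E_{α, mα+β}^{m+1}(z) for every nonnegative integer m, where α > 0. -/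
open scoped BigOperators

/-- The two-parameter Mittag-Leffler function `E_{α,β}(z) = Σ_k z^k / Γ(αk+β)`. -/
noncomputable def mittagLeffler2 (α β : ℝ) (z : ℂ) : ℂ :=
  ∑' k : ℕ, z ^ k / ((Real.Gamma (α * k + β) : ℝ) : ℂ)

/-!
`E_{α,β}` is an entire power series: `Γ(x)` eventually dominates every exponential `c ^ x`
(compare with `(⌊x⌋ - 1)!`), so `1 / Γ(αk + β)` decays faster than any geometric sequence.
Such a series may be differentiated termwise, and `m` differentiations turn `∑ aₖ zᵏ` into
`∑ (k+1)⋯(k+m) a_{k+m} zᵏ`. The claim is then the coefficient identity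
`(k+1)⋯(k+m) = m! (m+1)_k / k!`, both sides being `(k+m)! / k!`.
-/

open Filter

namespace Real

theorem eventually_rpow_le_Gamma {c : ℝ} (hc : 1 ≤ c) : ∀ᶠ x in atTop, c ^ x ≤ Gamma x := by
  filter_upwards [tendsto_nat_floor_atTop.eventually
      (FloorSemiring.eventually_mul_pow_lt_factorial_sub c c 1), eventually_ge_atTop 2]
    with x hfact hx
  have hfloor : 2 ≤ ⌊x⌋₊ := Nat.le_floor (by exact_mod_cast hx)
  have hGamma : Gamma ⌊x⌋₊ = (⌊x⌋₊ - 1).factorial := by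
    rw [← Gamma_nat_eq_factorial, Nat.cast_sub (by omega)]
    norm_num
  calc c ^ x ≤ c ^ ((⌊x⌋₊ : ℝ) + 1) :=
        rpow_le_rpow_of_exponent_le hc (Nat.lt_floor_add_one x).le
    _ = c * c ^ ⌊x⌋₊ := by rw [rpow_add_one (by positivity), rpow_natCast, mul_comm]
    _ ≤ Gamma ⌊x⌋₊ := hGamma ▸ hfact.le
    _ ≤ Gamma x := Gamma_strictMonoOn_Ici.monotoneOn
        (Set.mem_Ici.2 (by exact_mod_cast hfloor)) (Set.mem_Ici.2 hx) (Nat.floor_le (by linarith))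

theorem eventually_pow_le_Gamma_mul_add {α : ℝ} (hα : 0 < α) (β : ℝ) {M : ℝ} (hM : 1 ≤ M) :
    ∀ᶠ k : ℕ in atTop, M ^ k ≤ Gamma (α * k + β) := by
  have hlin : Tendsto (fun k : ℕ => α * k + β) atTop atTop :=
    tendsto_atTop_add_const_right _ _ (tendsto_natCast_atTop_atTop.const_mul_atTop hα)
  -- the exponent `2 / α` rather than `1 / α` absorbs the shift `β` once `α * k + β ≥ -β`
  have hM' : 1 ≤ M ^ (2 / α) := one_le_rpow hM (by positivity)
  filter_upwards [hlin.eventually (eventually_rpow_le_Gamma hM'),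
    hlin.eventually (eventually_ge_atTop (-β))] with k hk hβ
  calc M ^ k = M ^ (k : ℝ) := (rpow_natCast M k).symm
    _ ≤ M ^ (2 / α * (α * k + β)) := by
        refine rpow_le_rpow_of_exponent_le hM ?_
        rw [div_mul_eq_mul_div, le_div_iff₀ hα]
        linarith
    _ = (M ^ (2 / α)) ^ (α * k + β) := rpow_mul (by linarith) _ _
    _ ≤ Gamma (α * k + β) := hk

theorem summable_inv_abs_Gamma_mul_add_mul_pow {α : ℝ} (hα : 0 < α) (β r : ℝ) :
    Summable fun k : ℕ => |Gamma (α * k + β)|⁻¹ * r ^ k := by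
  refine summable_geometric_two.of_norm_bounded_eventually ?_
  rw [Nat.cofinite_eq_atTop]
  filter_upwards [eventually_pow_le_Gamma_mul_add hα β (by linarith [abs_nonneg r] :
      1 ≤ 2 * |r| + 1)] with k hk
  have hpos : 0 < (2 * |r| + 1) ^ k := by positivity
  rw [norm_mul, norm_inv, norm_pow, norm_abs_eq_norm, norm_eq_abs, norm_eq_abs,
    abs_of_pos (hpos.trans_le hk), inv_mul_le_iff₀ (hpos.trans_le hk)]
  calc |r| ^ k ≤ (1 / 2) ^ k * (2 * |r| + 1) ^ k := by
        rw [← mul_pow]; exact pow_le_pow_left₀ (abs_nonneg r) (by linarith) k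
    _ ≤ Gamma (α * k + β) * (1 / 2) ^ k := by rw [mul_comm]; gcongr

end Real

section EntirePowerSeries

variable {a : ℕ → ℂ}

theorem summable_norm_derived_coeff_mul_pow (ha : ∀ r : ℝ, Summable fun k => ‖a k‖ * r ^ k)
    (r : ℝ) : Summable fun k : ℕ => ‖((k : ℂ) + 1) * a (k + 1)‖ * r ^ k := by
  set R := |r| + 1
  refine ((summable_nat_add_iff 1).2 (ha (2 * R))).of_norm_bounded fun k => ?_
  have hk : ((k : ℝ) + 1) ≤ 2 ^ (k + 1) := by exact_mod_cast Nat.lt_two_pow_self.le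
  have hr : |r| ^ k ≤ R ^ (k + 1) :=
    (pow_le_pow_left₀ (abs_nonneg r) (by linarith) k).trans
      (pow_le_pow_right₀ (by linarith [abs_nonneg r]) k.le_succ)
  have hk1 : ‖(k : ℂ) + 1‖ = (k : ℝ) + 1 := by norm_cast
  rw [Real.norm_eq_abs, abs_mul, abs_norm, norm_mul, hk1, abs_pow, mul_pow]
  calc ((k : ℝ) + 1) * ‖a (k + 1)‖ * |r| ^ k
        ≤ 2 ^ (k + 1) * ‖a (k + 1)‖ * R ^ (k + 1) := by gcongr
    _ = ‖a (k + 1)‖ * (2 ^ (k + 1) * R ^ (k + 1)) := by ring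

theorem hasDerivAt_tsum_mul_pow (ha : ∀ r : ℝ, Summable fun k => ‖a k‖ * r ^ k) (z : ℂ) :
    HasDerivAt (fun w => ∑' k, a k * w ^ k)
      (∑' k : ℕ, ((k : ℂ) + 1) * a (k + 1) * z ^ k) z := by
  set R := ‖z‖ + 1
  have hbound : ∀ (k : ℕ) (w : ℂ), w ∈ Metric.ball 0 R →
      ‖a k * (k * w ^ (k - 1))‖ ≤ ‖a k‖ * k * R ^ (k - 1) := by
    intro k w hw
    rw [mem_ball_zero_iff] at hw
    rw [norm_mul, norm_mul, norm_pow, Complex.norm_natCast, ← mul_assoc]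
    gcongr
  have hu : Summable fun k => ‖a k‖ * k * R ^ (k - 1) := by
    refine (summable_nat_add_iff 1).1
      ((summable_norm_derived_coeff_mul_pow ha R).congr fun k => ?_)
    rw [norm_mul, Nat.add_sub_cancel, Nat.cast_add_one, mul_comm ‖_‖]
    norm_cast
  have hz : z ∈ Metric.ball (0 : ℂ) R := by rw [mem_ball_zero_iff]; linarith
  have hderiv := hasDerivAt_tsum_of_isPreconnected hu Metric.isOpen_ball
    (convex_ball (0 : ℂ) R).isPreconnected (fun k w _ => (hasDerivAt_pow k w).const_mul (a k))
    hbound hz ((ha ‖z‖).of_norm_bounded fun k => by simp) hz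
  refine hderiv.congr_deriv ?_
  rw [Summable.tsum_eq_zero_add (hu.of_norm_bounded fun k => hbound k z hz)]
  simp only [Nat.cast_zero, zero_mul, mul_zero, zero_add, Nat.add_sub_cancel, Nat.cast_add_one]
  exact tsum_congr fun k => by ring

theorem iteratedDeriv_tsum_mul_pow (ha : ∀ r : ℝ, Summable fun k => ‖a k‖ * r ^ k) (m : ℕ) :
    iteratedDeriv m (fun w => ∑' k, a k * w ^ k) =
      fun w => ∑' k, ((k + 1).ascFactorial m : ℂ) * a (k + m) * w ^ k := by
  induction m generalizing a with
  | zero => simp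
  | succ m ih =>
    have hderiv : deriv (fun w => ∑' k, a k * w ^ k) =
        fun w => ∑' k : ℕ, ((k : ℂ) + 1) * a (k + 1) * w ^ k :=
      funext fun z => (hasDerivAt_tsum_mul_pow ha z).deriv
    rw [iteratedDeriv_succ', hderiv, ih (summable_norm_derived_coeff_mul_pow ha)]
    funext w
    refine tsum_congr fun k => ?_
    rw [Nat.ascFactorial_succ, ← add_assoc]
    push_cast
    ring

end EntirePowerSeries

theorem poch_natCast (n k : ℕ) : poch n k = n.ascFactorial k := by
  simp [poch, Nat.ascFactorial_eq_prod_range]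

theorem ascFactorial_div_Gamma_eq (α β : ℝ) (m k : ℕ) :
    ((k + 1).ascFactorial m : ℝ) / Real.Gamma (α * (k + m : ℕ) + β) =
      m.factorial * (poch (m + 1) k / (k.factorial * Real.Gamma (α * k + (m * α + β)))) := by
  have hfact : (k.factorial : ℝ) * (k + 1).ascFactorial m =
      m.factorial * (m + 1).ascFactorial k := by
    exact_mod_cast (Nat.factorial_mul_ascFactorial k m).trans
      ((add_comm k m).symm ▸ (Nat.factorial_mul_ascFactorial m k).symm)
  have hpoch : poch ((m : ℝ) + 1) k = (m + 1).ascFactorial k := by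
    exact_mod_cast poch_natCast (m + 1) k
  rw [hpoch, ← mul_div_assoc, ← hfact,
    show α * (k + m : ℕ) + β = α * k + (m * α + β) by push_cast; ring]
  field_simp

/-- `(d/dz)^m E_{α,β}(z) = m! · E_{α, mα+β}^{m+1}(z)` for every `m : ℕ`, `α > 0`. -/
theorem mittagLeffler_iteratedDeriv (α β : ℝ) (hα : 0 < α) (m : ℕ) (z : ℂ) :
    iteratedDeriv m (mittagLeffler2 α β) z =
      (Nat.factorial m : ℂ) * prabhakar α (m * α + β) (m + 1) z := by
  have hseries : mittagLeffler2 α β =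
      fun w => ∑' k : ℕ, ((Real.Gamma (α * k + β) : ℝ) : ℂ)⁻¹ * w ^ k := by
    funext w
    simp only [mittagLeffler2, div_eq_inv_mul]
  have hentire : ∀ r : ℝ,
      Summable fun k : ℕ => ‖((Real.Gamma (α * k + β) : ℝ) : ℂ)⁻¹‖ * r ^ k := by
    simpa only [norm_inv, Complex.norm_real, Real.norm_eq_abs] using
      Real.summable_inv_abs_Gamma_mul_add_mul_pow hα β
  rw [hseries, iteratedDeriv_tsum_mul_pow hentire, prabhakar, ← tsum_mul_left]
  refine tsum_congr fun k => ?_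
  rw [← mul_assoc, ← div_eq_mul_inv]
  exact_mod_cast congrArg (fun x : ℝ => (x : ℂ) * z ^ k) (ascFactorial_div_Gamma_eq α β m k)
end

section
/- For every positive integer m and real z, the m-th derivative with respect to t of t^{β-1} E_{α,β}^γ(t^α z) equals t^{β-m-1} E_{α,β-m}^γ(t^α z) for t > 0, with α > 0 and β real. -/
open scoped BigOperators

/-- The real-argument Prabhakar function `E_{α,β}^γ(x)`. -/
noncomputable def prabhakarR (α β γ : ℝ) (x : ℝ) : ℝ :=
  ∑' k : ℕ, poch γ k * x ^ k / (Nat.factorial k * Real.Gamma (α * k + β))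

open Real Filter Set Topology

/-! Termwise, `t^{β-1} E_{α,β}^γ(t^α z) = ∑ₖ (γ)ₖ zᵏ / k! · t^{αk+β-1} / Γ(αk+β)`, and
`d/dt t^{q-1} / Γ(q) = t^{q-2} / Γ(q-1)`, so each derivative lowers `β` by one. Differentiating
termwise is legitimate because `1 / Γ(αk+β)` decays faster than any geometric sequence: by
log-convexity of `Γ`, `Γ(x + α) ≥ (x - 1)^α Γ(x)`, so the ratio test applies for every argument. -/

noncomputable def prabhakarTerm (α β γ x : ℝ) (k : ℕ) : ℝ :=
  poch γ k * x ^ k / (Nat.factorial k * Gamma (α * k + β))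

noncomputable def prabhakarKernel (α β γ z t : ℝ) : ℝ :=
  t ^ (β - 1) * prabhakarR α β γ (t ^ α * z)

theorem hasDerivAt_rpow_sub_one_div_Gamma (q : ℝ) {t : ℝ} (ht : 0 < t) :
    HasDerivAt (fun s => s ^ (q - 1) / Gamma q) (t ^ (q - 1 - 1) / Gamma (q - 1)) t := by
  -- at `q = 1` both sides vanish, matching the convention `Gamma 0 = 0` (the zero of `1 / Γ`)
  have hΓ : (q - 1) / Gamma q = (Gamma (q - 1))⁻¹ := by
    rcases eq_or_ne (q - 1) 0 with h | h
    · simp [h]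
    · have hq : Gamma q = (q - 1) * Gamma (q - 1) := by rw [← Gamma_add_one h, sub_add_cancel]
      rw [hq]
      exact div_mul_cancel_left₀ h _
  refine ((hasDerivAt_rpow_const (p := q - 1) (Or.inl ht.ne')).div_const (Gamma q)).congr_deriv ?_
  rw [div_eq_mul_inv _ (Gamma (q - 1)), ← hΓ]
  ring

theorem Gamma_mul_rpow_le_Gamma_add {x a : ℝ} (hx : 1 < x) (ha : 0 < a) :
    Gamma x * (x - 1) ^ a ≤ Gamma (x + a) := by
  have hslope := convexOn_log_Gamma.slope_mono_adjacent (x := x - 1) (y := x) (z := x + a)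
    (by simp [hx]) (by simp; linarith) (by linarith) (by linarith)
  have hrec : Gamma x = (x - 1) * Gamma (x - 1) := by
    rw [← Gamma_add_one (by linarith), sub_add_cancel]
  have hΓ₁ : 0 < Gamma (x - 1) := Gamma_pos_of_pos (by linarith)
  have hΓ : 0 < Gamma x := Gamma_pos_of_pos (by linarith)
  simp only [Function.comp_apply, sub_sub_cancel, div_one, add_sub_cancel_left] at hslope
  have hlog : log (Gamma x) = log (x - 1) + log (Gamma (x - 1)) := by
    rw [hrec, log_mul (by linarith) hΓ₁.ne']
  rw [le_div_iff₀ ha, hlog, add_sub_cancel_right] at hslope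
  rw [← log_le_log_iff (mul_pos hΓ (rpow_pos_of_pos (by linarith) a))
    (Gamma_pos_of_pos (by linarith)),
    log_mul hΓ.ne' (rpow_pos_of_pos (by linarith) a).ne', log_rpow (by linarith)]
  linarith

theorem summable_pow_div_Gamma {α : ℝ} (hα : 0 < α) (β B : ℝ) :
    Summable fun k : ℕ => B ^ k / Gamma (α * k + β) := by
  refine summable_of_ratio_norm_eventually_le (r := 1 / 2) (by norm_num) ?_
  have hlin : Tendsto (fun k : ℕ => α * k + β - 1) atTop atTop :=
    tendsto_atTop_add_const_right _ _
      (tendsto_atTop_add_const_right _ _ (tendsto_natCast_atTop_atTop.const_mul_atTop hα))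
  filter_upwards [hlin.eventually_gt_atTop 0,
    ((tendsto_rpow_atTop hα).comp hlin).eventually_ge_atTop (2 * |B|)] with k hpos hlarge
  simp only [Function.comp_apply] at hlarge
  set x := α * k + β
  have hx : 0 < Gamma x := Gamma_pos_of_pos (by linarith)
  have hx' : 0 < Gamma (x + α) := Gamma_pos_of_pos (by linarith)
  have hL : 0 < (x - 1) ^ α := rpow_pos_of_pos hpos _
  have hsucc : α * ((k + 1 : ℕ) : ℝ) + β = x + α := by push_cast; ring
  rw [hsucc, norm_div, norm_div, norm_pow, norm_pow, Real.norm_of_nonneg hx.le,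
    Real.norm_of_nonneg hx'.le, pow_succ, Real.norm_eq_abs]
  calc |B| ^ k * |B| / Gamma (x + α)
      ≤ |B| ^ k * |B| / (Gamma x * (x - 1) ^ α) := by
        gcongr; exact Gamma_mul_rpow_le_Gamma_add (by linarith) hα
    _ = |B| ^ k / Gamma x * (|B| / (x - 1) ^ α) := by rw [mul_div_mul_comm]
    _ ≤ |B| ^ k / Gamma x * (1 / 2) := by
        gcongr ?_ * ?_
        rw [div_le_iff₀ hL]; linarith
    _ = 1 / 2 * (|B| ^ k / Gamma x) := by ring

theorem abs_poch_le (γ : ℝ) (k : ℕ) : |poch γ k| ≤ (|γ| + 1) ^ k * Nat.factorial k := by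
  rw [poch, Finset.abs_prod, ← Finset.prod_range_add_one_eq_factorial, Nat.cast_prod,
    ← Finset.card_range k, ← Finset.prod_const, Finset.card_range, ← Finset.prod_mul_distrib]
  refine Finset.prod_le_prod (fun _ _ => abs_nonneg _) fun i _ => ?_
  push_cast
  have hi : (0 : ℝ) ≤ i := i.cast_nonneg
  calc |γ + i| ≤ |γ| + i := (abs_add_le _ _).trans_eq (by rw [abs_of_nonneg hi])
    _ ≤ (|γ| + 1) * (i + 1) := by nlinarith [abs_nonneg γ]

theorem summable_norm_prabhakarTerm {α : ℝ} (hα : 0 < α) (β γ x : ℝ) :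
    Summable fun k => ‖prabhakarTerm α β γ x k‖ := by
  refine (summable_pow_div_Gamma hα β ((|γ| + 1) * |x|)).abs.of_nonneg_of_le
    (fun _ => norm_nonneg _) fun k => ?_
  have hk : (0 : ℝ) < Nat.factorial k := by exact_mod_cast k.factorial_pos
  rw [prabhakarTerm, Real.norm_eq_abs, abs_div, abs_div, abs_mul, abs_mul, abs_pow, abs_pow,
    abs_of_pos hk, abs_of_nonneg (by positivity : 0 ≤ (|γ| + 1) * |x|)]
  calc |poch γ k| * |x| ^ k / (Nat.factorial k * |Gamma (α * k + β)|)
      ≤ (|γ| + 1) ^ k * Nat.factorial k * |x| ^ k / (Nat.factorial k * |Gamma (α * k + β)|) := by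
        gcongr; exact abs_poch_le γ k
    _ = ((|γ| + 1) * |x|) ^ k / |Gamma (α * k + β)| := by
        rw [mul_pow, mul_right_comm, mul_comm (Nat.factorial k : ℝ), mul_div_mul_right _ _ hk.ne']

theorem norm_prabhakarTerm_le_of_abs_le (α β γ : ℝ) {x y : ℝ} (h : |x| ≤ |y|) (k : ℕ) :
    ‖prabhakarTerm α β γ x k‖ ≤ ‖prabhakarTerm α β γ y k‖ := by
  simp only [prabhakarTerm, norm_div, norm_mul, norm_pow, Real.norm_eq_abs]
  gcongr

theorem rpow_sub_one_mul_prabhakarTerm (α β γ z : ℝ) (k : ℕ) {s : ℝ} (hs : 0 < s) :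
    s ^ (β - 1) * prabhakarTerm α β γ (s ^ α * z) k =
      poch γ k * z ^ k / Nat.factorial k * (s ^ (α * k + β - 1) / Gamma (α * k + β)) := by
  rw [prabhakarTerm, mul_pow, ← rpow_natCast (s ^ α), ← rpow_mul hs.le, add_sub_assoc,
    rpow_add hs]
  ring

theorem hasDerivAt_rpow_sub_one_mul_prabhakarTerm (α β γ z : ℝ) (k : ℕ) {t : ℝ} (ht : 0 < t) :
    HasDerivAt (fun s => s ^ (β - 1) * prabhakarTerm α β γ (s ^ α * z) k)
      (t ^ (β - 1 - 1) * prabhakarTerm α (β - 1) γ (t ^ α * z) k) t := by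
  rw [rpow_sub_one_mul_prabhakarTerm _ _ _ _ _ ht, ← add_sub_assoc]
  refine ((hasDerivAt_rpow_sub_one_div_Gamma (α * k + β) ht).const_mul _).congr_of_eventuallyEq ?_
  filter_upwards [Ioi_mem_nhds ht] with s hs using rpow_sub_one_mul_prabhakarTerm _ _ _ _ _ hs

theorem hasDerivAt_prabhakarKernel {α : ℝ} (hα : 0 < α) (β γ z : ℝ) {t : ℝ} (ht : 0 < t) :
    HasDerivAt (prabhakarKernel α β γ z) (prabhakarKernel α (β - 1) γ z t) t := by
  have hkernel : ∀ β s, prabhakarKernel α β γ z s =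
      ∑' k, s ^ (β - 1) * prabhakarTerm α β γ (s ^ α * z) k := fun β s => tsum_mul_left.symm
  have htS : t ∈ Ioo (t / 2) (2 * t) := ⟨by linarith, by linarith⟩
  obtain ⟨C, hC⟩ : ∃ C, ∀ y ∈ Icc (t / 2) (2 * t), ‖y ^ (β - 1 - 1)‖ ≤ C :=
    isCompact_Icc.exists_bound_of_continuousOn
      (continuousOn_id.rpow_const fun y hy => Or.inl (show 0 < y by linarith [hy.1]).ne')
  have hbound : ∀ k, ∀ y ∈ Ioo (t / 2) (2 * t),
      ‖y ^ (β - 1 - 1) * prabhakarTerm α (β - 1) γ (y ^ α * z) k‖ ≤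
        C * ‖prabhakarTerm α (β - 1) γ ((2 * t) ^ α * z) k‖ := by
    intro k y hy
    have hy0 : 0 < y := by linarith [hy.1]
    have hCy := hC y (Ioo_subset_Icc_self hy)
    have hterm : |y ^ α * z| ≤ |(2 * t) ^ α * z| := by
      rw [abs_mul, abs_mul, abs_of_pos (rpow_pos_of_pos hy0 _),
        abs_of_pos (rpow_pos_of_pos (by linarith) _)]
      gcongr
      exact hy.2.le
    rw [norm_mul]
    exact mul_le_mul hCy (norm_prabhakarTerm_le_of_abs_le _ _ _ hterm k) (norm_nonneg _)
      ((norm_nonneg _).trans hCy)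
  have hderiv := hasDerivAt_tsum_of_isPreconnected
    ((summable_norm_prabhakarTerm hα (β - 1) γ _).mul_left C) isOpen_Ioo isPreconnected_Ioo
    (fun k y hy => hasDerivAt_rpow_sub_one_mul_prabhakarTerm α β γ z k (by linarith [hy.1]))
    hbound htS ((summable_norm_prabhakarTerm hα β γ _).of_norm.mul_left _) htS
  rw [hkernel]
  exact hderiv.congr_of_eventuallyEq (Eventually.of_forall (hkernel β))

theorem iteratedDeriv_prabhakarKernel {α : ℝ} (hα : 0 < α) (β γ z : ℝ) (n : ℕ) :
    EqOn (iteratedDeriv n (prabhakarKernel α β γ z)) (prabhakarKernel α (β - n) γ z) (Ioi 0) := by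
  induction n with
  | zero => simp [EqOn]
  | succ n ih =>
    intro t ht
    rw [iteratedDeriv_succ, (ih.eventuallyEq_of_mem (Ioi_mem_nhds ht)).deriv_eq,
      (hasDerivAt_prabhakarKernel hα _ γ z ht).deriv, Nat.cast_succ, sub_sub]

theorem prabhakar_kernel_iteratedDeriv_general (α β γ z : ℝ) (hα : 0 < α) (m : ℕ)
    (t : ℝ) (ht : 0 < t) :
    iteratedDeriv m (fun s : ℝ => s ^ (β - 1) * prabhakarR α β γ (s ^ α * z)) t =
      t ^ (β - (m : ℝ) - 1) * prabhakarR α (β - m) γ (t ^ α * z) :=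
  iteratedDeriv_prabhakarKernel hα β γ z m ht

/-- For every positive integer `m` and real `z`,
`(d/dt)^m [t^{β-1} E_{α,β}^γ(t^α z)] = t^{β-m-1} E_{α,β-m}^γ(t^α z)` for `t > 0`. -/
theorem prabhakar_kernel_iteratedDeriv (α β γ z : ℝ) (hα : 0 < α) (m : ℕ) (hm : 0 < m)
    (t : ℝ) (ht : 0 < t) :
    iteratedDeriv m (fun s : ℝ => s ^ (β - 1) * prabhakarR α β γ (s ^ α * z)) t =
      t ^ (β - (m : ℝ) - 1) * prabhakarR α (β - m) γ (t ^ α * z) :=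
  prabhakar_kernel_iteratedDeriv_general α β γ z hα m t ht
end

section
/- The Prabhakar kernel spectral function K_{α,β}^γ(r) = r^{αγ-β} sin(γ θ_α(r) + (β - αγ)π) / [π (r^{2α} + 2 r^α cos(απ) + 1)^{γ/2}], with θ_α(r) = arctan(r^α sin(πα)/(r^α cos(πα) + 1)) chosen in [0, π], is nonnegative for all r ≥ 0 whenever 0 < α ≤ 1 and 0 < αγ ≤ β ≤ 1. -/
open scoped Real

/-- The continuous branch `θ_α(r) ∈ [0, π]` of
`arctan (r^α sin(πα) / (r^α cos(πα) + 1))`, realized as the argument of the complex number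
`(r^α cos(πα) + 1) + i r^α sin(πα)`. -/
noncomputable def thetaBranch (α r : ℝ) : ℝ :=
  Complex.arg ((r ^ α * Real.cos (π * α) + 1 : ℝ) + (r ^ α * Real.sin (π * α) : ℝ) * Complex.I)

/-- The Prabhakar spectral function `K_{α,β}^γ(r)`. -/
noncomputable def prabhakarSpectral (α β γ r : ℝ) : ℝ :=
  r ^ (α * γ - β) * Real.sin (γ * thetaBranch α r + (β - α * γ) * π) /
    (π * (r ^ (2 * α) + 2 * r ^ α * Real.cos (α * π) + 1) ^ (γ / 2))

/-!
The point `1 + r^α e^{iπα}` lies in the closed upper half plane, on the side of the ray of angle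
`πα` that contains `1`, so `0 ≤ θ_α(r) ≤ απ`. Hence `0 ≤ γ θ_α(r) + (β - αγ)π ≤ βπ ≤ π` and the sine
in the numerator is nonnegative, while the denominator is `π |1 + r^α e^{iπα}|^γ`.
-/

open Real

namespace Complex

theorem arg_le_of_im_mul_cos_le_re_mul_sin {z : ℂ} {φ : ℝ} (hφ0 : 0 < φ)
    (hz : z.im * Real.cos φ ≤ z.re * Real.sin φ) : arg z ≤ φ := by
  rcases eq_or_ne z 0 with rfl | hz0
  · simpa using hφ0.le
  have hsin : 0 ≤ Real.sin (φ - arg z) := by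
    have hnorm : 0 < ‖z‖ := norm_pos_iff.mpr hz0
    rw [Real.sin_sub, sin_arg, cos_arg hz0]
    calc (0 : ℝ) ≤ (z.re * Real.sin φ - z.im * Real.cos φ) / ‖z‖ :=
          div_nonneg (by linarith) hnorm.le
      _ = _ := by ring
  by_contra! hlt
  have hneg : Real.sin (φ - arg z) < 0 :=
    Real.sin_neg_of_neg_of_neg_pi_lt (by linarith) (by linarith [arg_le_pi z])
  linarith

end Complex

section ThetaBranch

variable {α : ℝ}

lemma sin_pi_mul_nonneg (hα0 : 0 ≤ α) (hα1 : α ≤ 1) : 0 ≤ sin (π * α) :=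
  sin_nonneg_of_nonneg_of_le_pi (by positivity) (by nlinarith [pi_pos])

lemma thetaBranch_nonneg (hα0 : 0 ≤ α) (hα1 : α ≤ 1) {r : ℝ} (hr : 0 ≤ r) :
    0 ≤ thetaBranch α r := by
  have hsin := sin_pi_mul_nonneg hα0 hα1
  rw [thetaBranch, Complex.arg_nonneg_iff]
  simp only [Complex.add_im, Complex.ofReal_re, Complex.ofReal_im, Complex.mul_im, Complex.I_re,
    Complex.I_im]
  nlinarith [rpow_nonneg hr α]

lemma thetaBranch_le (hα0 : 0 < α) (hα1 : α ≤ 1) (r : ℝ) : thetaBranch α r ≤ α * π := by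
  have hsin := sin_pi_mul_nonneg hα0.le hα1
  rw [mul_comm α π]
  refine Complex.arg_le_of_im_mul_cos_le_re_mul_sin (by positivity) ?_
  simp only [Complex.add_re, Complex.add_im, Complex.ofReal_re, Complex.ofReal_im,
    Complex.mul_re, Complex.mul_im, Complex.I_re, Complex.I_im]
  nlinarith

end ThetaBranch

lemma sq_add_two_mul_mul_cos_add_one_nonneg (x t : ℝ) : 0 ≤ x ^ 2 + 2 * x * cos t + 1 := by
  nlinarith [sin_sq_add_cos_sq t, sq_nonneg (x + cos t)]

/-- For `0 < α ≤ 1` and `0 < αγ ≤ β ≤ 1` the spectral function `K_{α,β}^γ(r)` is nonnegative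
for all `r ≥ 0`. -/
theorem prabhakarSpectral_nonneg (α β γ : ℝ)
    (hα0 : 0 < α) (hα1 : α ≤ 1) (hγ : 0 < α * γ) (hγβ : α * γ ≤ β) (hβ : β ≤ 1) :
    ∀ r : ℝ, 0 ≤ r → 0 ≤ prabhakarSpectral α β γ r := by
  intro r hr
  have hγ0 : 0 < γ := pos_of_mul_pos_right hγ hα0.le
  have hθ0 := thetaBranch_nonneg hα0.le hα1 hr
  have hθ := mul_le_mul_of_nonneg_left (thetaBranch_le hα0 hα1 r) hγ0.le
  have hnum : 0 ≤ sin (γ * thetaBranch α r + (β - α * γ) * π) :=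
    sin_nonneg_of_nonneg_of_le_pi (by nlinarith [pi_pos]) (by nlinarith [pi_pos])
  have hden : 0 ≤ r ^ (2 * α) + 2 * r ^ α * cos (α * π) + 1 := by
    rw [mul_comm 2 α, rpow_mul hr, rpow_two]
    exact sq_add_two_mul_mul_cos_add_one_nonneg _ _
  exact div_nonneg (mul_nonneg (rpow_nonneg hr _) hnum)
    (mul_nonneg pi_pos.le (rpow_nonneg hden _))
end

section
/- Series representation of the Prabhakar fractional integral: for f continuous on [t₀, T], α, β > 0 and real λ, γ, the Prabhakar integral equals the absolutely convergent series of Riemann–Liouville integrals: (J^γ_{α,β,λ;t₀} f)(t) = Σ_{k=0}^∞ [(γ)_k λ^k / k!] (J^{αk+β}_{t₀} f)(t) for every t ∈ [t₀, T]. -/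
open scoped BigOperators

/-- The Riemann–Liouville fractional integral of order `ρ` based at `t₀`. -/
noncomputable def rlInt (ρ t₀ : ℝ) (f : ℝ → ℝ) (t : ℝ) : ℝ :=
  (1 / Real.Gamma ρ) * ∫ u in t₀..t, (t - u) ^ (ρ - 1) * f u

open MeasureTheory intervalIntegral


lemma poch_abs_le (γ : ℝ) (k : ℕ) : |poch γ k| ≤ (1 + |γ|) ^ k * k.factorial := by
  induction k with
  | zero => simp [poch]
  | succ n ih =>
    have h1 : |poch γ (n+1)| = |poch γ n| * |γ + n| := by
      rw [poch, Finset.prod_range_succ, abs_mul]; rfl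
    have h2 : |γ + n| ≤ (1 + |γ|) * (n + 1) := by
      calc |γ + n| ≤ |γ| + n := by
            refine (abs_add_le _ _).trans ?_
            simp [abs_of_nonneg (by positivity : (0:ℝ) ≤ (n:ℝ))]
        _ ≤ (1 + |γ|) * (n + 1) := by nlinarith [abs_nonneg γ, (by positivity : (0:ℝ) ≤ (n:ℝ))]
    calc |poch γ (n+1)| = |poch γ n| * |γ + n| := h1
      _ ≤ ((1 + |γ|) ^ n * n.factorial) * ((1 + |γ|) * (n + 1)) := by
          apply mul_le_mul ih h2 (abs_nonneg _) (by positivity)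
      _ = (1 + |γ|) ^ (n+1) * (n+1).factorial := by
          rw [Nat.factorial_succ]; push_cast; ring

lemma summable_aux {α β : ℝ} (hα : 0 < α) (hβ : 0 < β) {ρ : ℝ} (hρ : 0 ≤ ρ) :
    Summable fun k : ℕ => ρ ^ k / Real.Gamma (α * k + β) := by
  set R : ℝ := max ((2*ρ+2) ^ (2/α)) 1 with hRdef
  have hR1 : (1:ℝ) ≤ R := le_max_right _ _
  have hR0 : (0:ℝ) ≤ R := by linarith
  obtain ⟨N, hN⟩ := (Filter.eventually_atTop).mp
    ((FloorSemiring.tendsto_pow_div_factorial_atTop R).eventually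
      (eventually_le_nhds (by norm_num : (0:ℝ) < 1)))
  have hfac : ∀ n ≥ N, R ^ n ≤ n.factorial := by
    intro n hn
    have := hN n hn
    have hfp : (0:ℝ) < n.factorial := by positivity
    rw [div_le_one hfp] at this; exact this
  set K : ℕ := ⌈((N:ℝ) + 7)/α⌉₊ with hKdef
  have hkey : ∀ k ≥ K, ρ ^ k / Real.Gamma (α * k + β) ≤ (1/2) ^ k := by
    intro k hk
    have hak : (N:ℝ) + 7 ≤ α * k := by
      have h1 : ((N:ℝ) + 7)/α ≤ (K:ℝ) := Nat.le_ceil _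
      have h2 : (K:ℝ) ≤ k := by exact_mod_cast hk
      calc (N:ℝ) + 7 = ((N:ℝ)+7)/α * α := by field_simp
        _ ≤ (k:ℝ) * α := by apply mul_le_mul_of_nonneg_right (h1.trans h2) hα.le
        _ = α * k := by ring
    set x : ℝ := α * k + β with hxdef
    have hx3 : (3:ℝ) ≤ x := by have : (0:ℝ) ≤ N := Nat.cast_nonneg N; simp only [hxdef]; linarith
    have hx0 : (0:ℝ) < x := by linarith
    set m : ℕ := ⌊x⌋₊ with hmdef
    have hmx : (m:ℝ) ≤ x := Nat.floor_le hx0.le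
    have hxm : x < m + 1 := Nat.lt_floor_add_one x
    have hm3 : 3 ≤ m := Nat.le_floor (by exact_mod_cast hx3)
    have hm1 : 1 ≤ m := by omega
    -- Gamma x ≥ (m-1)!
    have hGmono : Real.Gamma (m:ℝ) ≤ Real.Gamma x := by
      rcases eq_or_lt_of_le hmx with h | h
      · rw [h]
      · exact le_of_lt (Real.Gamma_strictMonoOn_Ici (by simp; exact_mod_cast (by omega : 2 ≤ m))
          (le_trans (by exact_mod_cast (by omega : 2 ≤ m)) hmx) h)
    have hGm : Real.Gamma (m:ℝ) = (m-1).factorial := by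
      have : (m:ℝ) = ((m-1 : ℕ):ℝ) + 1 := by
        have : m - 1 + 1 = m := by omega
        exact_mod_cast (by rw [this] : ((m:ℕ):ℝ) = ((m-1+1 : ℕ):ℝ))
      rw [this, Real.Gamma_nat_eq_factorial]
    have hmN : N ≤ m - 1 := by
      have : (N:ℝ) + 6 < (m:ℝ) := by linarith
      have h2 : N + 6 < m := by exact_mod_cast this
      omega
    have hfacm : R ^ (m-1) ≤ ((m-1).factorial : ℝ) := hfac _ hmN
    have hexp : R ^ ((α * k)/2 : ℝ) ≤ R ^ (m-1) := by
      rw [← Real.rpow_natCast R (m-1)]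
      apply Real.rpow_le_rpow_of_exponent_le hR1
      have : ((m-1:ℕ):ℝ) = (m:ℝ) - 1 := by
        have : 1 ≤ m := hm1
        push_cast [this]; ring
      rw [this]
      linarith
    have hbase : (2*ρ+2) ≤ R ^ (α/2 : ℝ) := by
      have h1 : ((2*ρ+2) ^ (2/α) : ℝ) ≤ R := le_max_left _ _
      have h2 : ((2*ρ+2) ^ (2/α) : ℝ) ^ (α/2 : ℝ) ≤ R ^ (α/2 : ℝ) :=
        Real.rpow_le_rpow (Real.rpow_nonneg (by linarith) _) h1 (by positivity)
      have hαne : α ≠ 0 := hα.ne'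
      have h3 : (2/α) * (α/2) = 1 := by field_simp
      rwa [← Real.rpow_mul (by linarith : (0:ℝ) ≤ 2*ρ+2), h3, Real.rpow_one] at h2
    have hpow : ((2*ρ+2):ℝ) ^ k ≤ Real.Gamma x := by
      calc ((2*ρ+2):ℝ) ^ k ≤ (R ^ (α/2 : ℝ)) ^ k := pow_le_pow_left₀ (by linarith) hbase k
        _ = R ^ ((α*k)/2 : ℝ) := by
            rw [← Real.rpow_natCast (R ^ (α/2:ℝ)) k, ← Real.rpow_mul hR0]
            ring_nf
        _ ≤ R ^ (m-1) := hexp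
        _ ≤ ((m-1).factorial : ℝ) := hfacm
        _ = Real.Gamma (m:ℝ) := hGm.symm
        _ ≤ Real.Gamma x := hGmono
    have hpow0 : (0:ℝ) < ((2*ρ+2):ℝ) ^ k := by positivity
    calc ρ ^ k / Real.Gamma x ≤ ρ ^ k / ((2*ρ+2)) ^ k :=
          div_le_div_of_nonneg_left (by positivity) hpow0 hpow
      _ = (ρ / (2*ρ+2)) ^ k := by rw [div_pow]
      _ ≤ (1/2) ^ k := by
          apply pow_le_pow_left₀ (by positivity)
          rw [div_le_div_iff₀ (by linarith) (by norm_num)]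
          linarith
  apply summable_of_isBigO_nat (summable_geometric_of_lt_one (by norm_num) (by norm_num : (1/2:ℝ) < 1))
  apply Asymptotics.IsBigO.of_bound 1
  rw [Filter.eventually_atTop]
  refine ⟨K, fun k hk => ?_⟩
  have h1 := hkey k hk
  have hG : 0 < Real.Gamma (α * k + β) := Real.Gamma_pos_of_pos (by positivity)
  rw [Real.norm_eq_abs, Real.norm_eq_abs, abs_of_nonneg (by positivity), abs_of_nonneg (by positivity)]
  linarith



lemma kernel_intble {r : ℝ} (hr : -1 < r) (t₀ t : ℝ) :
    IntervalIntegrable (fun u => (t - u) ^ r) volume t₀ t := by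
  have h := (intervalIntegral.intervalIntegrable_rpow' hr (a := t - t₀) (b := t - t)).comp_sub_left t
  simpa using h

lemma kernel_integral {r : ℝ} (hr : -1 < r) {t₀ t : ℝ} (h : t₀ ≤ t) :
    ∫ u in t₀..t, (t - u) ^ r = (t - t₀) ^ (r+1) / (r+1) := by
  rw [intervalIntegral.integral_comp_sub_left (fun x => x ^ r) t, sub_self,
    integral_rpow (Or.inl hr)]
  rw [Real.zero_rpow (by linarith : r + 1 ≠ 0)]
  ring

lemma kernel_abs_bound {r t₀ t M : ℝ} (hr : -1 < r) (h : t₀ ≤ t) {f : ℝ → ℝ}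
    (hM : ∀ u ∈ Set.Icc t₀ t, |f u| ≤ M)
    (hint : IntervalIntegrable (fun u => (t - u) ^ r * f u) volume t₀ t) :
    ∫ u in t₀..t, |(t - u) ^ r * f u| ≤ M * ((t - t₀) ^ (r+1) / (r+1)) := by
  have hker := kernel_intble hr t₀ t
  have hle : ∫ u in t₀..t, |(t - u) ^ r * f u| ≤ ∫ u in t₀..t, (t - u) ^ r * M := by
    apply intervalIntegral.integral_mono_on h hint.abs (hker.mul_const M)
    intro u hu
    have hu0 : (0:ℝ) ≤ t - u := by linarith [hu.2]
    have hk0 : (0:ℝ) ≤ (t - u) ^ r := Real.rpow_nonneg hu0 r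
    rw [abs_mul, abs_of_nonneg hk0]
    exact mul_le_mul_of_nonneg_left (hM u hu) hk0
  calc ∫ u in t₀..t, |(t - u) ^ r * f u| ≤ ∫ u in t₀..t, (t - u) ^ r * M := hle
    _ = (∫ u in t₀..t, (t - u) ^ r) * M := by rw [intervalIntegral.integral_mul_const]
    _ = M * ((t - t₀) ^ (r+1) / (r+1)) := by rw [kernel_integral hr h]; ring

/-- Series representation of the Prabhakar fractional integral: for `f` continuous on
`[t₀, T]`, `α, β > 0` and real `λ, γ`, the Prabhakar integral equals the absolutely
convergent series `Σ_k (γ)_k λ^k / k! · (J^{αk+β}_{t₀} f)(t)` for every `t ∈ [t₀, T]`. -/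
theorem prabhakar_integral_series (α β γ lam t₀ T : ℝ) (hα : 0 < α) (hβ : 0 < β)
    (f : ℝ → ℝ) (hf : ContinuousOn f (Set.Icc t₀ T)) :
    ∀ t ∈ Set.Icc t₀ T,
      (Summable fun k : ℕ => |poch γ k * lam ^ k / (Nat.factorial k) *
          rlInt (α * k + β) t₀ f t|) ∧
      ∫ u in t₀..t, (t - u) ^ (β - 1) * prabhakarR α β γ (lam * (t - u) ^ α) * f u =
        ∑' k : ℕ, poch γ k * lam ^ k / (Nat.factorial k) * rlInt (α * k + β) t₀ f t := by
  intro t ht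
  obtain ⟨ht0, htT⟩ := ht
  have hf' : ContinuousOn f (Set.Icc t₀ t) := hf.mono (Set.Icc_subset_Icc le_rfl htT)
  obtain ⟨M, hM'⟩ := isCompact_Icc.exists_bound_of_continuousOn hf'
  have hM : ∀ u ∈ Set.Icc t₀ t, |f u| ≤ M := fun u hu => by
    simpa [Real.norm_eq_abs] using hM' u hu
  have hM0 : 0 ≤ M := le_trans (abs_nonneg _) (hM t₀ ⟨le_rfl, ht0⟩)
  set s : ℝ := t - t₀ with hsdef
  have hs0 : 0 ≤ s := by simp [hsdef]; linarith
  set ρ : ℝ := (1 + |γ|) * |lam| * s ^ α with hρdef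
  have hρ0 : 0 ≤ ρ := by positivity
  have hγ0 : (0:ℝ) ≤ 1 + |γ| := by positivity
  have hfc : ContinuousOn f (Set.uIcc t₀ t) := by rwa [Set.uIcc_of_le ht0]
  have hgam : ∀ k : ℕ, 0 < Real.Gamma (α * k + β) := fun k =>
    Real.Gamma_pos_of_pos (by positivity)
  have hr : ∀ k : ℕ, (-1:ℝ) < α * k + β - 1 := fun k => by
    have : (0:ℝ) ≤ α * k := by positivity
    linarith
  have hintk : ∀ k : ℕ,
      IntervalIntegrable (fun u => (t - u) ^ (α * k + β - 1) * f u) volume t₀ t :=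
    fun k => (kernel_intble (hr k) t₀ t).mul_continuousOn hfc
  -- abbreviate the kernel integrals and their bounds
  have keyabs : ∀ k : ℕ, ∫ u in t₀..t, |(t - u) ^ (α * k + β - 1) * f u| ≤
      M * (s ^ (α * k + β) / (α * k + β)) := by
    intro k
    have h1 := kernel_abs_bound (hr k) ht0 hM (hintk k)
    have h2 : α * (k:ℝ) + β - 1 + 1 = α * k + β := by ring
    rwa [h2] at h1
  -- the summable majorant
  set B : ℕ → ℝ := fun k => (M * s ^ β / β) * (ρ ^ k / Real.Gamma (α * k + β)) with hBdef
  have hBsum : Summable B := (summable_aux hα hβ hρ0).mul_left _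
  have hsplit : ∀ k : ℕ, s ^ (α * k + β) = (s ^ α) ^ k * s ^ β := by
    intro k
    rw [Real.rpow_add' hs0 (by positivity : α * (k:ℝ) + β ≠ 0)]
    congr 1
    rw [← Real.rpow_natCast (s ^ α) k, ← Real.rpow_mul hs0]
  have hck : ∀ k : ℕ, |poch γ k * lam ^ k / (Nat.factorial k * Real.Gamma (α * k + β))| ≤
      (1 + |γ|) ^ k * |lam| ^ k / Real.Gamma (α * k + β) := by
    intro k
    have hfp : (0:ℝ) < (Nat.factorial k : ℝ) := by positivity
    rw [abs_div, abs_mul, abs_pow, abs_mul,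
      abs_of_pos hfp, abs_of_pos (hgam k)]
    rw [div_le_div_iff₀ (by positivity) (hgam k)]
    have h1 : |poch γ k| * |lam| ^ k ≤ ((1 + |γ|) ^ k * Nat.factorial k) * |lam| ^ k :=
      mul_le_mul_of_nonneg_right (poch_abs_le γ k) (by positivity)
    calc |poch γ k| * |lam| ^ k * Real.Gamma (α * k + β)
        ≤ ((1 + |γ|) ^ k * Nat.factorial k) * |lam| ^ k * Real.Gamma (α * k + β) :=
          mul_le_mul_of_nonneg_right h1 (hgam k).le
      _ = (1 + |γ|) ^ k * |lam| ^ k * (Nat.factorial k * Real.Gamma (α * k + β)) := by ring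
  have hIbound : ∀ k : ℕ,
      |poch γ k * lam ^ k / (Nat.factorial k * Real.Gamma (α * k + β))| *
        (∫ u in t₀..t, |(t - u) ^ (α * k + β - 1) * f u|) ≤ B k := by
    intro k
    have hInn : (0:ℝ) ≤ ∫ u in t₀..t, |(t - u) ^ (α * k + β - 1) * f u| :=
      intervalIntegral.integral_nonneg ht0 (fun u _ => abs_nonneg _)
    have h1 : |poch γ k * lam ^ k / (Nat.factorial k * Real.Gamma (α * k + β))| *
        (∫ u in t₀..t, |(t - u) ^ (α * k + β - 1) * f u|) ≤
        ((1 + |γ|) ^ k * |lam| ^ k / Real.Gamma (α * k + β)) *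
          (M * (s ^ (α * k + β) / (α * k + β))) := by
      apply mul_le_mul (hck k) (keyabs k) hInn (by positivity)
    refine h1.trans ?_
    have h2 : s ^ (α * k + β) / (α * k + β) ≤ s ^ (α * k + β) / β := by
      apply div_le_div_of_nonneg_left (by positivity) hβ
      have : (0:ℝ) ≤ α * k := by positivity
      linarith
    have h3 : ((1 + |γ|) ^ k * |lam| ^ k / Real.Gamma (α * k + β)) *
          (M * (s ^ (α * k + β) / (α * k + β))) ≤
        ((1 + |γ|) ^ k * |lam| ^ k / Real.Gamma (α * k + β)) *
          (M * (s ^ (α * k + β) / β)) := by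
      apply mul_le_mul_of_nonneg_left (mul_le_mul_of_nonneg_left h2 hM0) (by positivity)
    refine h3.trans (le_of_eq ?_)
    rw [hBdef]
    simp only [hρdef, mul_pow, hsplit k]
    field_simp
  -- first conjunct
  have hterm_eq : ∀ k : ℕ, poch γ k * lam ^ k / (Nat.factorial k) * rlInt (α * k + β) t₀ f t =
      poch γ k * lam ^ k / (Nat.factorial k * Real.Gamma (α * k + β)) *
        ∫ u in t₀..t, (t - u) ^ (α * k + β - 1) * f u := by
    intro k
    rw [rlInt]
    ring
  have hsum1 : Summable fun k : ℕ => |poch γ k * lam ^ k / (Nat.factorial k) *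
      rlInt (α * k + β) t₀ f t| := by
    apply Summable.of_nonneg_of_le (fun k => abs_nonneg _) _ hBsum
    intro k
    rw [hterm_eq k, abs_mul]
    refine le_trans ?_ (hIbound k)
    apply mul_le_mul_of_nonneg_left (intervalIntegral.abs_integral_le_integral_abs ht0)
      (abs_nonneg _)
  refine ⟨hsum1, ?_⟩
  -- second conjunct
  set μ : Measure ℝ := volume.restrict (Set.Ioc t₀ t) with hμdef
  set F : ℕ → ℝ → ℝ := fun k u =>
    poch γ k * lam ^ k / (Nat.factorial k * Real.Gamma (α * k + β)) *
      ((t - u) ^ (α * k + β - 1) * f u) with hFdef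
  have hFint : ∀ k : ℕ, Integrable (F k) μ := by
    intro k
    have h1 := (hintk k).const_mul
      (poch γ k * lam ^ k / (Nat.factorial k * Real.Gamma (α * k + β)))
    exact (intervalIntegrable_iff_integrableOn_Ioc_of_le ht0).mp h1
  have hFnorm : Summable fun k : ℕ => ∫ u, ‖F k u‖ ∂μ := by
    apply Summable.of_nonneg_of_le (fun k => integral_nonneg (fun u => norm_nonneg _)) _ hBsum
    intro k
    have h1 : ∫ u, ‖F k u‖ ∂μ = ∫ u in t₀..t, |F k u| := by
      rw [intervalIntegral.integral_of_le ht0]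
      simp [Real.norm_eq_abs, hμdef]
    rw [h1]
    have h2 : ∀ u, |F k u| =
        |poch γ k * lam ^ k / (Nat.factorial k * Real.Gamma (α * k + β))| *
          |(t - u) ^ (α * k + β - 1) * f u| := by
      intro u; rw [hFdef]; simp [abs_mul]
    simp only [h2]
    rw [intervalIntegral.integral_const_mul]
    exact hIbound k
  have hswap := integral_tsum_of_summable_integral_norm hFint hFnorm
  -- identify each ∫ F k with the series term
  have hFk_int : ∀ k : ℕ, ∫ u, F k u ∂μ =
      poch γ k * lam ^ k / (Nat.factorial k) * rlInt (α * k + β) t₀ f t := by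
    intro k
    have h1 : ∫ u, F k u ∂μ = ∫ u in t₀..t, F k u := by
      rw [intervalIntegral.integral_of_le ht0]
    rw [h1, hFdef]
    rw [intervalIntegral.integral_const_mul]
    rw [hterm_eq k]
  -- a.e. identification of the integrand with ∑' F k
  have hae : (fun u => (t - u) ^ (β - 1) * prabhakarR α β γ (lam * (t - u) ^ α) * f u)
      =ᵐ[μ] fun u => ∑' k : ℕ, F k u := by
    rw [hμdef, Filter.EventuallyEq, ae_restrict_iff' measurableSet_Ioc]
    have h1 : ∀ᵐ u : ℝ ∂volume, u ≠ t := by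
      refine ae_iff.mpr ?_
      have : {u : ℝ | ¬u ≠ t} = {t} := by ext u; simp
      rw [this]; exact Real.volume_singleton
    filter_upwards [h1] with u hu hmem
    have hut : t₀ < u := hmem.1
    have h0 : (0:ℝ) < t - u := by
      have := lt_of_le_of_ne hmem.2 hu
      linarith
    rw [prabhakarR]
    rw [mul_assoc, ← tsum_mul_right, ← tsum_mul_left]
    apply tsum_congr
    intro k
    have hx : (lam * (t - u) ^ α) ^ k = lam ^ k * (t - u) ^ (α * (k:ℝ)) := by
      rw [mul_pow]
      congr 1
      rw [← Real.rpow_natCast ((t - u) ^ α) k, ← Real.rpow_mul h0.le]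
    have hy : (t - u) ^ (β - 1) * (t - u) ^ (α * (k:ℝ)) = (t - u) ^ (α * k + β - 1) := by
      rw [← Real.rpow_add h0]
      ring_nf
    rw [hFdef]
    simp only
    rw [hx, ← hy]
    ring
  calc ∫ u in t₀..t, (t - u) ^ (β - 1) * prabhakarR α β γ (lam * (t - u) ^ α) * f u
      = ∫ u, (∑' k : ℕ, F k u) ∂μ := by
        rw [intervalIntegral.integral_of_le ht0]
        exact integral_congr_ae hae
    _ = ∑' k : ℕ, ∫ u, F k u ∂μ := hswap.symm
    _ = ∑' k : ℕ, poch γ k * lam ^ k / (Nat.factorial k) * rlInt (α * k + β) t₀ f t :=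
        tsum_congr hFk_int
end
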